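/- Let (f_n) : (G_n,p_n) → (H_n,q_n) be a level morphism of inverse sequences of groups (q_n ∘ f_{n+1} = f_n ∘ p_n for all n) such that the induced map f̃ : lim← G_n → lim← H_n between inverse limits is surjective. If (H_n, q_n) is Mittag-Leffler, then for every n there exists m ≥ n such that q_{nm}(H_m) ⊆ Im(f_n). -/

import Mathlib

/-!
Let `S_j ⊆ H_j` be the stable image `q_{j N_j}(H_{N_j})` given by the Mittag-Leffler property.
The bonding map `q_j` sends `S_{j+1}` onto `S_j`: both are images of one `H_M` with `M` large.
Hence every point of `S_n` extends, step by step, to a thread of `lim← H_k`, which lifts to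
`lim← G_k` by surjectivity; its `n`-th coordinate is a preimage under `f_n`.
-/

/-- Composite bonding map `p_{n m} : X_m → X_n` (for `n ≤ m`) of an inverse
sequence `(X_n, p_n)`. -/
def tbond (X : ℕ → Type u) (p : ∀ n, X (n + 1) → X n) {n m : ℕ} (h : n ≤ m) :
    X m → X n :=
  Nat.leRecOn h (fun {k} (g : X k → X n) (x : X (k + 1)) => g (p k x)) id

/-- The Mittag-Leffler property for an inverse sequence of sets: for every
`n₀` there is `n₁ > n₀` such that the image of `X_n` in `X_{n₀}` equals the
image of `X_{n₁}` in `X_{n₀}` for all `n > n₁`. -/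
def IsML (X : ℕ → Type u) (p : ∀ n, X (n + 1) → X n) : Prop :=
  ∀ n₀ : ℕ, ∃ n₁ : ℕ, ∃ h₁ : n₀ < n₁, ∀ n : ℕ, ∀ h : n₁ < n,
    Set.range (tbond X p (h₁.le.trans h.le)) = Set.range (tbond X p h₁.le)

section InverseSequence

variable (X : ℕ → Type u) (p : ∀ n, X (n + 1) → X n)

theorem tbond_self {n : ℕ} (h : n ≤ n) (x : X n) : tbond X p h x = x := by
  unfold tbond
  rw [Nat.leRecOn_self]
  rfl

theorem tbond_succ {n m : ℕ} (h : n ≤ m) (h' : n ≤ m + 1) (x : X (m + 1)) :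
    tbond X p h' x = tbond X p h (p m x) := by
  unfold tbond
  rw [Nat.leRecOn_succ h]

theorem tbond_tbond {n m k : ℕ} (hnm : n ≤ m) (hmk : m ≤ k) (x : X k) :
    tbond X p hnm (tbond X p hmk x) = tbond X p (hnm.trans hmk) x := by
  induction k, hmk using Nat.le_induction with
  | base => rw [tbond_self]
  | succ k hmk ih => rw [tbond_succ X p hmk, tbond_succ X p (hnm.trans hmk), ih]

theorem bond_tbond {n m : ℕ} (h : n + 1 ≤ m) (x : X m) :
    p n (tbond X p h x) = tbond X p (n.le_succ.trans h) x := by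
  rw [← tbond_tbond X p n.le_succ h, tbond_succ X p le_rfl, tbond_self]

theorem tbond_eq_of_bond_eq {n : ℕ} (s : ∀ k, X (n + k))
    (hs : ∀ k, p (n + k) (s (k + 1)) = s k) (k : ℕ) :
    tbond X p (Nat.le_add_right n k) (s k) = s 0 := by
  induction k with
  | zero => exact tbond_self X p _ _
  | succ k ih => rw [tbond_succ X p (Nat.le_add_right n k), hs, ih]

/-- A sequence `s_k ∈ X_{n+k}` compatible with the bonding maps is the tail of a thread:
the `j`-th coordinate is the image of `s_j`, which lies above level `j`. -/
theorem exists_thread_of_bond_eq {n : ℕ} (s : ∀ k, X (n + k))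
    (hs : ∀ k, p (n + k) (s (k + 1)) = s k) :
    ∃ x : ∀ j, X j, (∀ j, p j (x (j + 1)) = x j) ∧ x n = s 0 := by
  refine ⟨fun j => tbond X p (Nat.le_add_left j n) (s j), fun j => ?_, ?_⟩
  · rw [bond_tbond X p, tbond_succ X p (Nat.le_add_left j n), hs]
  · rw [← tbond_eq_of_bond_eq X p s hs n]

theorem exists_thread_of_surjOn (S : ∀ j, Set (X j))
    (hS : ∀ j, Set.SurjOn (p j) (S (j + 1)) (S j)) {n : ℕ} {x₀ : X n} (hx₀ : x₀ ∈ S n) :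
    ∃ x : ∀ j, X j, (∀ j, p j (x (j + 1)) = x j) ∧ x n = x₀ := by
  choose lift lift_mem bond_lift using hS
  let s : ∀ k, S (n + k) :=
    fun k => Nat.rec (motive := fun k => S (n + k)) ⟨x₀, hx₀⟩
      (fun k y => ⟨lift (n + k) y.2, lift_mem _ _⟩) k
  exact exists_thread_of_bond_eq X p (fun k => (s k).1) fun k => bond_lift _ _

theorem IsML.exists_surjOn_range (hML : IsML X p) :
    ∃ N : ℕ → ℕ, ∃ hN : ∀ j, j ≤ N j,
      ∀ j, Set.SurjOn (p j) (Set.range (tbond X p (hN (j + 1))))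
        (Set.range (tbond X p (hN j))) := by
  choose N hN hstable using hML
  refine ⟨N, fun j => (hN j).le, fun j x hx => ?_⟩
  set M := max (N j) (N (j + 1)) + 1
  have hjM : N j < M := Nat.lt_succ_of_le (le_max_left _ _)
  have hj1M : N (j + 1) < M := Nat.lt_succ_of_le (le_max_right _ _)
  obtain ⟨w, rfl⟩ : x ∈ Set.range (tbond X p ((hN j).le.trans hjM.le)) := by
    rwa [hstable j M hjM]
  refine ⟨tbond X p ((hN (j + 1)).le.trans hj1M.le) w, ?_, bond_tbond X p _ w⟩
  rw [← hstable (j + 1) M hj1M]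
  exact ⟨w, rfl⟩

end InverseSequence

theorem level_morphism_surjective_limit_epi_condition_general
    (G H : ℕ → Type u) [∀ n, Group (G n)] [∀ n, Group (H n)]
    (p : ∀ n, G (n + 1) →* G n) (q : ∀ n, H (n + 1) →* H n)
    (f : ∀ n, G n →* H n)
    (hsurj : ∀ h : ∀ n, H n, (∀ n, q n (h (n + 1)) = h n) →
      ∃ g : ∀ n, G n, (∀ n, p n (g (n + 1)) = g n) ∧ ∀ n, f n (g n) = h n)
    (hML : IsML H (fun n => ⇑(q n))) :
    ∀ n : ℕ, ∃ m : ℕ, ∃ hnm : n ≤ m,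
      Set.range (tbond H (fun k => ⇑(q k)) hnm) ⊆ Set.range (f n) := by
  obtain ⟨N, hN, hsurjOn⟩ := hML.exists_surjOn_range
  intro n
  refine ⟨N n, hN n, fun x hx => ?_⟩
  obtain ⟨h, hh, rfl⟩ := exists_thread_of_surjOn H _ _ hsurjOn hx
  obtain ⟨g, -, hfg⟩ := hsurj h hh
  exact ⟨g n, hfg n⟩

/-- Condition (E) for epimorphisms: if a level morphism `(f_n)` of inverse
sequences of groups induces a surjection between the inverse limits and the
target sequence is Mittag-Leffler, then for every `n` there is `m ≥ n` with
`q_{nm}(H_m) ⊆ Im(f_n)`. -/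
theorem level_morphism_surjective_limit_epi_condition
    (G H : ℕ → Type u) [∀ n, Group (G n)] [∀ n, Group (H n)]
    (p : ∀ n, G (n + 1) →* G n) (q : ∀ n, H (n + 1) →* H n)
    (f : ∀ n, G n →* H n)
    (hlev : ∀ n (x : G (n + 1)), q n (f (n + 1) x) = f n (p n x))
    (hsurj : ∀ h : ∀ n, H n, (∀ n, q n (h (n + 1)) = h n) →
      ∃ g : ∀ n, G n, (∀ n, p n (g (n + 1)) = g n) ∧ ∀ n, f n (g n) = h n)
    (hML : IsML H (fun n => ⇑(q n))) :
    ∀ n : ℕ, ∃ m : ℕ, ∃ hnm : n ≤ m,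
      Set.range (tbond H (fun k => ⇑(q k)) hnm) ⊆ Set.range (f n) :=
  level_morphism_surjective_limit_epi_condition_general G H p q f hsurj hML
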